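/- Let K : 𝔻² → ℝ and h : 𝕊¹ → ℝ be continuous. The set 𝕏 = {u ∈ H¹(𝔻²) : ∫_{𝔻²} K e^u > 0 and ∫_{𝕊¹} h e^{u/2} > 0} is nonempty if and only if K is positive at some point of 𝔻² and h is positive at some point of 𝕊¹. -/

import Mathlib

open MeasureTheory Metric Filter Set
open scoped Real NNReal Topology

noncomputable section

/-- The closed unit disk `𝔻² ⊆ ℝ²`, identified with a subset of `ℂ`. -/
def Disk : Set ℂ := Metric.closedBall 0 1

/-- The unit circle `𝕊¹ = ∂𝔻²`. -/
def Circ : Set ℂ := Metric.sphere 0 1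

/-- Arc-length measure on curves in `ℝ² ≅ ℂ`: the 1-dimensional Hausdorff measure. -/
def arcLength : Measure ℂ := μH[1]

/-- The Euclidean Laplacian of `u : ℂ → ℝ`: the sum of the second derivatives in the two
orthonormal directions `1` and `I`. -/
def laplacian (u : ℂ → ℝ) (x : ℂ) : ℝ :=
  fderiv ℝ (fun y => fderiv ℝ u y 1) x 1 +
    fderiv ℝ (fun y => fderiv ℝ u y Complex.I) x Complex.I

/-- `u` is a (classical) solution of `−Δu = 2 K e^u` in `𝔻²`,
`∂u/∂η + 2 = 2 h e^{u/2}` on `𝕊¹` (the outward unit normal at `x ∈ 𝕊¹` is `x` itself;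
`u` is taken to be `C²`, extended to the plane). -/
def SolvesPrescribed (K h u : ℂ → ℝ) : Prop :=
  ContDiff ℝ 2 u ∧
  (∀ x ∈ Disk, -laplacian u x = 2 * K x * Real.exp (u x)) ∧
  (∀ x ∈ Circ, fderiv ℝ u x x + 2 = 2 * h x * Real.exp (u x / 2))

/-!
Necessity holds because the weights `e^u` and `e^{u/2}` are positive. For sufficiency take a
bump `φ₁` inside the open disk where `K > 0` and a bump `φ₂` at a point of the circle where
`h > 0`, and set `u = 2 log (φ₁ + s (φ₂ + t))` with `s, t > 0`. Since `φ₁` vanishes on the circle,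
the boundary integral is `s ∫ h (φ₂ + t)`, which is positive for small `t`; the interior integral
`∫ K (φ₁ + s (φ₂ + t))²` is a quadratic polynomial in `s` with positive constant term
`∫ K φ₁²`, hence positive for small `s`. That `∫ h φ₂ > 0` rests on every arc of the circle
having positive length: a `1`-Lipschitz projection maps it onto a nondegenerate interval.
-/

open scoped ENNReal ComplexConjugate

section Integrals

variable {X : Type*} [MeasurableSpace X] {μ : Measure X} {S : Set X}

lemma ContinuousOn.integrableOn_of_measure_ne_top [TopologicalSpace X] [T2Space X]
    [OpensMeasurableSpace X] {f : X → ℝ} (hf : ContinuousOn f S) (hS : IsCompact S) (hμ : μ S ≠ ∞) :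
    IntegrableOn f S μ := by
  have : IsFiniteMeasure (μ.restrict S) := isFiniteMeasure_restrict.mpr hμ
  simpa [IntegrableOn, Measure.restrict_restrict_of_subset subset_rfl] using
    hf.integrableOn_compact (μ := μ.restrict S) hS

lemma exists_pos_of_setIntegral_mul_pos {f w : X → ℝ} (hS : MeasurableSet S)
    (hw : ∀ x ∈ S, 0 ≤ w x) (h : 0 < ∫ x in S, f x * w x ∂μ) : ∃ x ∈ S, 0 < f x := by
  by_contra! hf
  exact h.not_ge <| setIntegral_nonpos hS fun x hx =>
    mul_nonpos_of_nonpos_of_nonneg (hf x hx) (hw x hx)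

lemma setIntegral_mul_pos {f w : X → ℝ} (hS : MeasurableSet S) (hw : ∀ x, 0 ≤ w x)
    (hf : ∀ x ∈ Function.support w ∩ S, 0 < f x)
    (hint : IntegrableOn (fun x => f x * w x) S μ) (hμ : 0 < μ (Function.support w ∩ S)) :
    0 < ∫ x in S, f x * w x ∂μ := by
  have hnonneg : ∀ x ∈ S, 0 ≤ f x * w x := fun x hx => by
    by_cases hwx : w x = 0
    · simp [hwx]
    · exact mul_nonneg (hf x ⟨hwx, hx⟩).le (hw x)
  rw [setIntegral_pos_iff_support_of_nonneg_ae (ae_restrict_of_forall_mem hS hnonneg) hint]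
  refine hμ.trans_le (measure_mono fun x hx => ⟨?_, hx.2⟩)
  exact mul_ne_zero (hf x hx).ne' hx.1

variable [TopologicalSpace X] [T2Space X] [OpensMeasurableSpace X]

lemma eventually_setIntegral_mul_add_pos {f w₀ w₁ : X → ℝ} (hS : IsCompact S) (hμ : μ S ≠ ∞)
    (hf : ContinuousOn f S) (hw₀ : ContinuousOn w₀ S) (hw₁ : ContinuousOn w₁ S)
    (h : 0 < ∫ x in S, f x * w₀ x ∂μ) :
    ∀ᶠ t in 𝓝 0, 0 < ∫ x in S, f x * (w₀ x + t * w₁ x) ∂μ := by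
  have hlin : ∀ t : ℝ, ∫ x in S, f x * (w₀ x + t * w₁ x) ∂μ =
      ∫ x in S, f x * w₀ x ∂μ + t * ∫ x in S, f x * w₁ x ∂μ := fun t => by
    rw [← integral_const_mul, ← integral_add]
    · congr with x
      ring
    all_goals exact ContinuousOn.integrableOn_of_measure_ne_top (by fun_prop) hS hμ
  simp only [hlin]
  exact (continuous_const.add (continuous_id.mul continuous_const)).tendsto' 0 _ (by simp)
    |>.eventually (lt_mem_nhds h)

lemma eventually_setIntegral_mul_add_sq_pos {f w₀ w₁ : X → ℝ} (hS : IsCompact S)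
    (hμ : μ S ≠ ∞) (hf : ContinuousOn f S) (hw₀ : ContinuousOn w₀ S) (hw₁ : ContinuousOn w₁ S)
    (h : 0 < ∫ x in S, f x * w₀ x ^ 2 ∂μ) :
    ∀ᶠ t in 𝓝 0, 0 < ∫ x in S, f x * (w₀ x + t * w₁ x) ^ 2 ∂μ := by
  have hquad : ∀ t : ℝ, ∫ x in S, f x * (w₀ x + t * w₁ x) ^ 2 ∂μ =
      ∫ x in S, f x * w₀ x ^ 2 ∂μ + t * ∫ x in S, f x * (2 * w₀ x * w₁ x) ∂μ +
        t ^ 2 * ∫ x in S, f x * w₁ x ^ 2 ∂μ := fun t => by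
    rw [← integral_const_mul, ← integral_const_mul, ← integral_add, ← integral_add]
    · congr with x
      ring
    all_goals exact ContinuousOn.integrableOn_of_measure_ne_top (by fun_prop) hS hμ
  simp only [hquad]
  exact (by fun_prop : Continuous fun t : ℝ => _ + t * _ + t ^ 2 * _).tendsto' 0 _ (by simp)
    |>.eventually (lt_mem_nhds h)

end Integrals

lemma ContinuousOn.exists_pos_of_mem_closure {X : Type*} [TopologicalSpace X] {f : X → ℝ}
    {s t : Set X} {x : X} (hf : ContinuousOn f t) (hst : s ⊆ t) (hx : x ∈ t)
    (hxs : x ∈ closure s) (hfx : 0 < f x) : ∃ y ∈ s, 0 < f y := by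
  have := mem_closure_iff_nhdsWithin_neBot.mp hxs
  have hpos : ∀ᶠ y in 𝓝[s] x, 0 < f y :=
    ((hf x hx).eventually (lt_mem_nhds hfx)).filter_mono (nhdsWithin_mono x hst)
  obtain ⟨y, hfy, hys⟩ := (hpos.and self_mem_nhdsWithin).exists
  exact ⟨y, hys, hfy⟩

lemma exists_contDiffBump_pos_on {E : Type*} [NormedAddCommGroup E] [NormedSpace ℝ E]
    [HasContDiffBump E] {f : E → ℝ} {S U : Set E} {p : E} (hf : ContinuousWithinAt f S p)
    (hp : 0 < f p) (hU : U ∈ 𝓝 p) :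
    ∃ b : ContDiffBump p, Function.support b ⊆ U ∧ ∀ x ∈ Function.support b ∩ S, 0 < f x := by
  obtain ⟨δ, hδ, hfδ⟩ := Metric.mem_nhdsWithin_iff.mp (hf.eventually (lt_mem_nhds hp))
  obtain ⟨ε, hε, hεU⟩ := Metric.mem_nhds_iff.mp hU
  let b : ContDiffBump p := ⟨min δ ε / 2, min δ ε, by positivity, half_lt_self (by positivity)⟩
  refine ⟨b, ?_, fun x hx => hfδ ⟨?_, hx.2⟩⟩
  · rw [b.support_eq]
    exact (ball_subset_ball (min_le_right _ _)).trans hεU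
  · rw [b.support_eq] at hx
    exact ball_subset_ball (min_le_left _ _) hx.1

lemma isCompact_Disk : IsCompact Disk := isCompact_closedBall 0 1

lemma isCompact_Circ : IsCompact Circ := isCompact_sphere 0 1

lemma Circ_eq_image_circleMap : Circ = circleMap 0 1 '' Ioc 0 (2 * π) := by
  rw [← zero_add (2 * π), (periodic_circleMap 0 1).image_Ioc Real.two_pi_pos, range_circleMap,
    abs_one]
  rfl

lemma arcLength_Circ_lt_top : arcLength Circ < ∞ := by
  rw [Circ_eq_image_circleMap]
  calc arcLength (circleMap 0 1 '' Ioc 0 (2 * π))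
      ≤ (Real.nnabs 1 : ℝ≥0∞) ^ (1 : ℝ) * μH[1] (Ioc 0 (2 * π)) :=
        (lipschitzWith_circleMap 0 1).hausdorffMeasure_image_le zero_le_one _
    _ < ∞ := by simp [hausdorffMeasure_real, ENNReal.mul_lt_top]

lemma arcLength_ball_inter_Circ_pos {y : ℂ} (hy : y ∈ Circ) {r : ℝ} (hr : 0 < r) :
    0 < arcLength (ball y r ∩ Circ) := by
  have hy1 : ‖y‖ = 1 := mem_sphere_zero_iff_norm.mp hy
  set s := min (r / 2) 1
  have hs : 0 < s := by positivity
  let γ : ℝ → ℂ := fun θ => y * Complex.exp (Complex.I * θ)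
  let p : ℂ → ℝ := fun z => (conj y * z).im
  have hγ : γ '' Icc (-s) s ⊆ ball y r ∩ Circ := by
    rintro _ ⟨θ, hθ, rfl⟩
    refine ⟨?_, ?_⟩
    · rw [mem_ball, dist_eq_norm]
      calc ‖γ θ - y‖ = ‖Complex.exp (Complex.I * θ) - 1‖ := by
            rw [← mul_sub_one, norm_mul, hy1, one_mul]
        _ ≤ ‖θ‖ := Real.norm_exp_I_mul_ofReal_sub_one_le
        _ ≤ s := abs_le.mpr hθ
        _ < r := by linarith [min_le_left (r / 2) 1]
    · simp [Circ, γ, hy1, Complex.norm_exp_I_mul_ofReal]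
  have hpγ : p ∘ γ = Real.sin := by
    ext θ
    show (conj y * (y * Complex.exp (Complex.I * θ))).im = Real.sin θ
    rw [← mul_assoc, Complex.conj_mul', hy1, mul_comm Complex.I]
    simp [Complex.exp_ofReal_mul_I_im]
  have hp : LipschitzWith 1 p := by
    refine LipschitzWith.of_dist_le_mul fun z w => ?_
    calc dist (p z) (p w) = |(conj y * (z - w)).im| := by
          simp [p, Real.dist_eq, mul_sub]
      _ ≤ ‖conj y * (z - w)‖ := Complex.abs_im_le_norm _
      _ = 1 * dist z w := by simp [hy1, dist_eq_norm]
  have hsin : Icc (Real.sin (-s)) (Real.sin s) ⊆ p '' (ball y r ∩ Circ) := by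
    calc Icc (Real.sin (-s)) (Real.sin s) ⊆ Real.sin '' Icc (-s) s :=
          intermediate_value_Icc (by linarith) Real.continuous_sin.continuousOn
      _ = p '' (γ '' Icc (-s) s) := by rw [image_image]; exact congrArg (· '' _) hpγ.symm
      _ ⊆ p '' (ball y r ∩ Circ) := image_mono hγ
  have hsin_pos : 0 < Real.sin s :=
    Real.sin_pos_of_pos_of_lt_pi hs (by linarith [min_le_right (r / 2) 1, Real.pi_gt_three])
  calc (0 : ℝ≥0∞) < μH[1] (Icc (Real.sin (-s)) (Real.sin s)) := by
        simp [hausdorffMeasure_real, hsin_pos]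
    _ ≤ μH[1] (p '' (ball y r ∩ Circ)) := measure_mono hsin
    _ ≤ arcLength (ball y r ∩ Circ) := by
        simpa [arcLength] using hp.hausdorffMeasure_image_le zero_le_one (ball y r ∩ Circ)

def MemX (K h u : ℂ → ℝ) : Prop :=
  ContDiff ℝ 1 u ∧ 0 < ∫ x in Disk, K x * Real.exp (u x) ∧
    0 < ∫ x in Circ, h x * Real.exp (u x / 2) ∂arcLength

lemma memX_two_mul_log {K h g : ℂ → ℝ} (hg : ContDiff ℝ 1 g) (hg0 : ∀ x, 0 < g x)
    (hK : 0 < ∫ x in Disk, K x * g x ^ 2) (hh : 0 < ∫ x in Circ, h x * g x ∂arcLength) :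
    MemX K h fun x => 2 * Real.log (g x) := by
  have hexp : ∀ x, Real.exp (2 * Real.log (g x)) = g x ^ 2 := fun x => by
    rw [two_mul, Real.exp_add, Real.exp_log (hg0 x), sq]
  have hexp_half : ∀ x, Real.exp (2 * Real.log (g x) / 2) = g x := fun x => by
    rw [mul_div_cancel_left₀ _ two_ne_zero, Real.exp_log (hg0 x)]
  exact ⟨contDiff_const.mul (hg.log fun x => (hg0 x).ne'), by simpa only [hexp],
    by simpa only [hexp_half]⟩

lemma exists_contDiff_setIntegral_Disk_pos {K : ℂ → ℝ} (hK : ContinuousOn K Disk) {x₀ : ℂ}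
    (hx₀ : x₀ ∈ Disk) (hKx₀ : 0 < K x₀) :
    ∃ φ : ℂ → ℝ, ContDiff ℝ 1 φ ∧ (∀ x, 0 ≤ φ x) ∧ (∀ x ∈ Circ, φ x = 0) ∧
      0 < ∫ x in Disk, K x * φ x ^ 2 := by
  obtain ⟨x₁, hx₁, hKx₁⟩ := hK.exists_pos_of_mem_closure ball_subset_closedBall hx₀
    (by rwa [closure_ball 0 one_ne_zero]) hKx₀
  obtain ⟨φ, hφ, hKφ⟩ := exists_contDiffBump_pos_on (hK x₁ (ball_subset_closedBall hx₁)) hKx₁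
    (isOpen_ball.mem_nhds hx₁)
  have hφ_cont := φ.continuous
  refine ⟨φ, φ.contDiff, fun x => φ.nonneg, fun x hx => ?_, ?_⟩
  · exact Function.notMem_support.mp fun hφx =>
      (mem_ball_zero_iff.mp (hφ hφx)).ne (mem_sphere_zero_iff_norm.mp hx)
  refine setIntegral_mul_pos isCompact_Disk.measurableSet (fun x => sq_nonneg _) ?_
    ((hK.mul (by fun_prop)).integrableOn_of_measure_ne_top isCompact_Disk
      isCompact_Disk.measure_ne_top) ?_
  all_goals rw [Function.support_pow _ two_ne_zero]
  · exact hKφ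
  · rw [inter_eq_left.mpr (hφ.trans ball_subset_closedBall : _ ⊆ Disk), φ.support_eq]
    exact measure_ball_pos _ _ φ.rOut_pos

lemma exists_contDiff_setIntegral_Circ_pos {h : ℂ → ℝ} (hh : ContinuousOn h Circ) {y₀ : ℂ}
    (hy₀ : y₀ ∈ Circ) (hhy₀ : 0 < h y₀) :
    ∃ φ : ℂ → ℝ, ContDiff ℝ 1 φ ∧ (∀ x, 0 ≤ φ x) ∧ 0 < ∫ x in Circ, h x * φ x ∂arcLength := by
  obtain ⟨φ, -, hhφ⟩ := exists_contDiffBump_pos_on (hh y₀ hy₀) hhy₀ univ_mem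
  have hφ_cont := φ.continuous
  exact ⟨φ, φ.contDiff, fun x => φ.nonneg, setIntegral_mul_pos isCompact_Circ.measurableSet
    (fun x => φ.nonneg) hhφ
    ((hh.mul (by fun_prop)).integrableOn_of_measure_ne_top isCompact_Circ arcLength_Circ_lt_top.ne)
    (by simpa only [φ.support_eq] using arcLength_ball_inter_Circ_pos hy₀ φ.rOut_pos)⟩

lemma exists_memX_of_setIntegral_pos {K h φ₁ φ₂ : ℂ → ℝ} (hK : ContinuousOn K Disk)
    (hh : ContinuousOn h Circ) (hφ₁ : ContDiff ℝ 1 φ₁) (hφ₁_nonneg : ∀ x, 0 ≤ φ₁ x)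
    (hφ₁_Circ : ∀ x ∈ Circ, φ₁ x = 0) (hD : 0 < ∫ x in Disk, K x * φ₁ x ^ 2)
    (hφ₂ : ContDiff ℝ 1 φ₂) (hφ₂_nonneg : ∀ x, 0 ≤ φ₂ x)
    (hC : 0 < ∫ x in Circ, h x * φ₂ x ∂arcLength) :
    ∃ u, MemX K h u := by
  have hφ₁_cont := hφ₁.continuous
  have hφ₂_cont := hφ₂.continuous
  obtain ⟨t, ht, hCt⟩ := (eventually_setIntegral_mul_add_pos (w₁ := fun _ => 1) isCompact_Circ
    arcLength_Circ_lt_top.ne hh (by fun_prop) continuousOn_const hC).exists_gt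
  simp only [mul_one] at hCt
  obtain ⟨s, hs, hDs⟩ := (eventually_setIntegral_mul_add_sq_pos (w₁ := fun x => φ₂ x + t)
    isCompact_Disk isCompact_Disk.measure_ne_top hK (by fun_prop) (by fun_prop) hD).exists_gt
  refine ⟨_, memX_two_mul_log (hφ₁.add (contDiff_const.mul (hφ₂.add contDiff_const)))
    (fun x => ?_) hDs ?_⟩
  · exact add_pos_of_nonneg_of_pos (hφ₁_nonneg x)
      (mul_pos hs (add_pos_of_nonneg_of_pos (hφ₂_nonneg x) ht))
  · calc 0 < s * ∫ x in Circ, h x * (φ₂ x + t) ∂arcLength := mul_pos hs hCt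
      _ = _ := by
        rw [← integral_const_mul]
        refine setIntegral_congr_fun isCompact_Circ.measurableSet fun x hx => ?_
        simp only [hφ₁_Circ x hx]
        ring

/-- **Lemma 2.1.** The set `𝕏 = {u ∈ H¹(𝔻²) : ∫_{𝔻²} K e^u > 0, ∫_{𝕊¹} h e^{u/2} > 0}`
is nonempty if and only if `K` is positive somewhere on `𝔻²` and `h` is positive somewhere
on `𝕊¹`. -/
theorem memX_nonempty_iff
    (K h : ℂ → ℝ) (hK : ContinuousOn K Disk) (hh : ContinuousOn h Circ) :
    (∃ u : ℂ → ℝ, ContDiff ℝ 1 u ∧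
        0 < ∫ x in Disk, K x * Real.exp (u x) ∧
        0 < ∫ x in Circ, h x * Real.exp (u x / 2) ∂arcLength) ↔
      ((∃ x ∈ Disk, 0 < K x) ∧ (∃ x ∈ Circ, 0 < h x)) := by
  constructor
  · rintro ⟨u, -, hD, hC⟩
    exact ⟨exists_pos_of_setIntegral_mul_pos isCompact_Disk.measurableSet
        (fun x _ => (Real.exp_pos _).le) hD,
      exists_pos_of_setIntegral_mul_pos isCompact_Circ.measurableSet
        (fun x _ => (Real.exp_pos _).le) hC⟩
  · rintro ⟨⟨x₀, hx₀, hKx₀⟩, y₀, hy₀, hhy₀⟩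
    obtain ⟨φ₁, hφ₁, hφ₁_nonneg, hφ₁_Circ, hD⟩ := exists_contDiff_setIntegral_Disk_pos hK hx₀ hKx₀
    obtain ⟨φ₂, hφ₂, hφ₂_nonneg, hC⟩ := exists_contDiff_setIntegral_Circ_pos hh hy₀ hhy₀
    exact exists_memX_of_setIntegral_pos hK hh hφ₁ hφ₁_nonneg hφ₁_Circ hD hφ₂ hφ₂_nonneg hC
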